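/- Let φ be an exponential map on a k-domain B and let k̄ be an algebraic closure of k. Then φ ⊗ id is an exponential map on B ⊗_k k̄ whose ring of invariants is B^φ ⊗_k k̄, and it is non-trivial whenever φ is non-trivial. -/

import Mathlib

/-!
`φ ⊗ id` is obtained from the universal property of `K ⊗[k] B`; coassociativity is an identity of
ring homomorphisms, so it only needs checking on `a ⊗ 1` and `1 ⊗ b`.
Writing `x = ∑ eᵢ ⊗ bᵢ` in a `k`-basis `(eᵢ)` of `K`, the coefficient maps of `φ ⊗ id` act on the
coordinates `bᵢ`, so `x` is invariant exactly when every `bᵢ` is: the invariants are `K ⊗ B^φ`.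
Over a field `k`, `B → K ⊗[k] B` is injective, so `φ ⊗ id` is non-trivial when `φ` is.
-/

open Polynomial in
structure ExpMap (k B : Type*) [CommRing k] [CommRing B] [Algebra k B] where
  toAlgHom : B →ₐ[k] Polynomial B
  eval_zero : ∀ b, (toAlgHom b).eval 0 = b
  coassoc : ∀ b, (toAlgHom b).map toAlgHom.toRingHom =
      Polynomial.eval₂ ((C : Polynomial B →+* Polynomial (Polynomial B)).comp
        (C : B →+* Polynomial B)) (C X + X) (toAlgHom b)

noncomputable def ExpMap.invariants {k B : Type*} [CommRing k] [CommRing B] [Algebra k B]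
    (φ : ExpMap k B) : Subalgebra k B :=
  AlgHom.equalizer φ.toAlgHom (Polynomial.CAlgHom)

open Polynomial TensorProduct
open Algebra.TensorProduct (includeRight includeRight_apply includeRight_injective)

theorem TensorProduct.equivFinsuppOfBasisLeft_lTensor {R M N P ι : Type*} [CommSemiring R]
    [AddCommMonoid M] [AddCommMonoid N] [AddCommMonoid P] [Module R M] [Module R N] [Module R P]
    [DecidableEq ι] (𝒞 : Module.Basis ι R M) (f : N →ₗ[R] P) (x : M ⊗[R] N)
    (i : ι) : equivFinsuppOfBasisLeft 𝒞 (f.lTensor M x) i = f (equivFinsuppOfBasisLeft 𝒞 x i) := by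
  induction x with
  | zero => simp
  | tmul m n => simp
  | add x y hx hy => simp [hx, hy]

namespace Subalgebra

variable {R A B : Type*} [CommSemiring R] [Semiring A] [CommSemiring B] [Algebra R A] [Algebra R B]

theorem baseChange_eq_adjoin (C : Subalgebra R A) :
    C.baseChange B = Algebra.adjoin B (includeRight '' (C : Set A)) := by
  apply le_antisymm
  · rintro _ ⟨x, rfl⟩
    induction x with
    | zero => simp
    | tmul b c =>
        show b ⊗ₜ (c : A) ∈ _
        rw [← mul_one b, ← smul_eq_mul, ← smul_tmul']
        exact Subalgebra.smul_mem _ (Algebra.subset_adjoin (Set.mem_image_of_mem _ c.2)) _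
    | add x y hx hy => rw [map_add]; exact add_mem hx hy
  · rw [Algebra.adjoin_le_iff]
    rintro _ ⟨c, hc, rfl⟩
    exact tmul_mem_baseChange hc 1

theorem mem_baseChange_of_basis {ι : Type*} [DecidableEq ι] (𝒞 : Module.Basis ι R B)
    {C : Subalgebra R A} {x : B ⊗[R] A} (h : ∀ i, equivFinsuppOfBasisLeft 𝒞 x i ∈ C) :
    x ∈ C.baseChange B := by
  rw [← (equivFinsuppOfBasisLeft 𝒞).symm_apply_apply x, equivFinsuppOfBasisLeft_symm_apply]
  exact sum_mem fun i _ => tmul_mem_baseChange (h i) _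

end Subalgebra

namespace ExpMap

section

variable {k B : Type*} [CommRing k] [CommRing B] [Algebra k B] (φ : ExpMap k B)

theorem mem_invariants_iff {b : B} : b ∈ φ.invariants ↔ φ.toAlgHom b = C b := Iff.rfl

noncomputable def coeff (n : ℕ) : B →ₗ[k] B :=
  (lcoeff B n).restrictScalars k ∘ₗ φ.toAlgHom.toLinearMap

theorem coeff_apply (n : ℕ) (b : B) : φ.coeff n b = (φ.toAlgHom b).coeff n := rfl

theorem mem_invariants_iff_coeff {b : B} : b ∈ φ.invariants ↔ ∀ n ≠ 0, φ.coeff n b = 0 := by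
  simp only [mem_invariants_iff, Polynomial.ext_iff, coeff_C, coeff_apply]
  refine forall_congr' fun n => ?_
  rcases eq_or_ne n 0 with rfl | hn
  · simp [coeff_zero_eq_eval_zero, φ.eval_zero]
  · simp [hn]

variable (K : Type*) [CommRing K] [Algebra k K]

noncomputable def baseChange : ExpMap K (K ⊗[k] B) where
  toAlgHom := AlgHom.liftEquiv k K B _ ((mapAlgHom includeRight).comp φ.toAlgHom)
  eval_zero x := by
    induction x with
    | zero => simp
    | tmul a b => simp [eval_smul, eval_zero_map, φ.eval_zero, smul_tmul']
    | add x y hx hy => simp [hx, hy]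
  coassoc x := by
    set ψ : K ⊗[k] B →ₐ[K] (K ⊗[k] B)[X] :=
      AlgHom.liftEquiv k K B _ ((mapAlgHom includeRight).comp φ.toAlgHom)
    have hb (b : B) : ψ (1 ⊗ₜ b) = (φ.toAlgHom b).map includeRight.toRingHom := by simp [ψ]
    have hψ : ψ.toRingHom.comp (includeRight : B →ₐ[k] K ⊗[k] B).toRingHom =
        (mapRingHom includeRight.toRingHom).comp φ.toAlgHom.toRingHom := RingHom.ext hb
    suffices (mapRingHom ψ.toRingHom).comp ψ.toRingHom =
        (eval₂RingHom (C.comp C) (C X + X : (K ⊗[k] B)[X][X])).comp ψ.toRingHom from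
      congr($this x)
    ext1
    · refine RingHom.ext fun a => ?_
      have ha : ψ (a ⊗ₜ 1) = C (a ⊗ₜ 1) := ψ.commutes a
      simp [ha]
    · refine RingHom.ext fun b => ?_
      change (ψ (1 ⊗ₜ b)).map ψ.toRingHom = eval₂ (C.comp C) (C X + X) (ψ (1 ⊗ₜ b))
      rw [hb, Polynomial.map_map, hψ, ← Polynomial.map_map, φ.coassoc, ← coe_mapRingHom,
        hom_eval₂, eval₂_map]
      congr 1
      · ext; simp
      · simp

theorem baseChange_tmul (a : K) (b : B) :
    (φ.baseChange K).toAlgHom (a ⊗ₜ b) = a • (φ.toAlgHom b).map includeRight.toRingHom := rfl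

theorem baseChange_one_tmul (b : B) :
    (φ.baseChange K).toAlgHom (1 ⊗ₜ b) = (φ.toAlgHom b).map includeRight.toRingHom := by
  rw [baseChange_tmul, one_smul]

theorem coeff_baseChange (n : ℕ) : (φ.baseChange K).coeff n = (φ.coeff n).baseChange K := by
  ext b
  simp [coeff_apply, baseChange_one_tmul, coeff_map]

theorem invariants_baseChange [Module.Free k K] :
    (φ.baseChange K).invariants = φ.invariants.baseChange K := by
  classical
  let 𝒞 := Module.Free.chooseBasis k K
  apply le_antisymm
  · intro x hx
    refine Subalgebra.mem_baseChange_of_basis 𝒞 fun i => φ.mem_invariants_iff_coeff.2 fun n hn => ?_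
    have hxn := (φ.baseChange K).mem_invariants_iff_coeff.1 hx n hn
    rw [coeff_baseChange, LinearMap.baseChange_eq_ltensor] at hxn
    simpa [equivFinsuppOfBasisLeft_lTensor] using congr(equivFinsuppOfBasisLeft 𝒞 $hxn i)
  · rw [Subalgebra.baseChange_eq_adjoin, Algebra.adjoin_le_iff]
    rintro _ ⟨b, hb, rfl⟩
    rw [SetLike.mem_coe, mem_invariants_iff, includeRight_apply, baseChange_one_tmul,
      φ.mem_invariants_iff.1 hb, map_C]
    rfl

end

theorem one_tmul_mem_invariants_baseChange_iff {k B : Type*} [Field k] [CommRing B] [Algebra k B]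
    (φ : ExpMap k B) (K : Type*) [CommRing K] [Nontrivial K] [Algebra k K] (b : B) :
    (1 : K) ⊗ₜ[k] b ∈ (φ.baseChange K).invariants ↔ b ∈ φ.invariants := by
  rw [mem_invariants_iff, mem_invariants_iff, baseChange_one_tmul]
  exact (map_injective _ (includeRight_injective (algebraMap k K).injective)).eq_iff' (map_C _)

end ExpMap

open TensorProduct in
theorem expMap_baseChange_general
    {k B : Type*} [Field k] [CommRing B] [Algebra k B]
    (φ : ExpMap k B) :
    ∃ ψ : ExpMap (AlgebraicClosure k) (AlgebraicClosure k ⊗[k] B),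
      (∀ b : B, ψ.toAlgHom ((1 : AlgebraicClosure k) ⊗ₜ[k] b)
          = (φ.toAlgHom b).map
              (Algebra.TensorProduct.includeRight :
                B →ₐ[k] AlgebraicClosure k ⊗[k] B).toRingHom) ∧
      ψ.invariants = Algebra.adjoin (AlgebraicClosure k)
          ((Algebra.TensorProduct.includeRight :
              B →ₐ[k] AlgebraicClosure k ⊗[k] B) '' (φ.invariants : Set B)) ∧
      (φ.invariants ≠ ⊤ → ψ.invariants ≠ ⊤) := by
  refine ⟨φ.baseChange _, φ.baseChange_one_tmul _, ?_, fun hφ hψ => hφ ?_⟩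
  · rw [ExpMap.invariants_baseChange, Subalgebra.baseChange_eq_adjoin]
  · refine eq_top_iff.2 fun b _ => ?_
    rw [← ExpMap.one_tmul_mem_invariants_baseChange_iff φ (AlgebraicClosure k), hψ]
    trivial

open TensorProduct in
/-- Base change of an exponential map to the algebraic closure: φ ⊗ id is an
exponential map on k̄ ⊗ₖ B whose invariant ring is B^φ ⊗ₖ k̄ (the k̄-subalgebra
generated by the image of B^φ), and it is non-trivial whenever φ is. -/
theorem expMap_baseChange
    {k B : Type*} [Field k] [CommRing B] [IsDomain B] [Algebra k B]
    (φ : ExpMap k B) :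
    ∃ ψ : ExpMap (AlgebraicClosure k) (AlgebraicClosure k ⊗[k] B),
      (∀ b : B, ψ.toAlgHom ((1 : AlgebraicClosure k) ⊗ₜ[k] b)
          = (φ.toAlgHom b).map
              (Algebra.TensorProduct.includeRight :
                B →ₐ[k] AlgebraicClosure k ⊗[k] B).toRingHom) ∧
      ψ.invariants = Algebra.adjoin (AlgebraicClosure k)
          ((Algebra.TensorProduct.includeRight :
              B →ₐ[k] AlgebraicClosure k ⊗[k] B) '' (φ.invariants : Set B)) ∧
      (φ.invariants ≠ ⊤ → ψ.invariants ≠ ⊤) :=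
  expMap_baseChange_general φ
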